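/- Define c_1 = 1, c_2 = 1 - 1/200, and c_i = min{Δ^{0.1}, c_{i-1}·exp(c_{i-1}/(3·200·e^{200}))} for i > 2 (where Δ ≥ 2 is a fixed integer). Then the smallest t with c_t = Δ^{0.1} satisfies t = O(log* Δ). -/

import Mathlib

/-- Fuel-based iterated logarithm. -/
def logStarAux : ℕ → ℕ → ℕ
  | 0, _ => 0
  | fuel + 1, n => if n ≤ 2 then 0 else logStarAux fuel (Nat.log 2 n) + 1

/-- The iterated logarithm `log* n`. -/
def logStar (n : ℕ) : ℕ := logStarAux n n

/-!
Write `A = 3·200·e^200`. The substitution `c = A y` turns the uncapped step `x ↦ x e^{x/A}`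
into `y ↦ y e^y`, which starts at `y₀ = (1 - 1/200)/A`. Since `y e^y ≥ y + y₀²` along the orbit,
after a constant number `N` of steps (depending only on `A`) the orbit exceeds `2`. From then on
`log* n + 1` further steps push it above `n + 1`: if `z ≥ log₂ n + 1` then `z e^z ≥ 2^z > n`.
Hence after `N + log* Δ + 1` steps the uncapped value exceeds `Δ ≥ Δ^{0.1}`, and as long as the
cap is not reached the capped sequence agrees with the uncapped one.
-/

lemma logStarAux_of_le_two (fuel : ℕ) {n : ℕ} (h : n ≤ 2) : logStarAux fuel n = 0 := by
  cases fuel <;> simp [logStarAux, h]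

lemma logStarAux_eq_of_le {n f g : ℕ} (hf : n ≤ f) (hg : n ≤ g) :
    logStarAux f n = logStarAux g n := by
  induction n using Nat.strong_induction_on generalizing f g with
  | _ n ih =>
    by_cases h2 : n ≤ 2
    · rw [logStarAux_of_le_two f h2, logStarAux_of_le_two g h2]
    · obtain ⟨f, rfl⟩ : ∃ f', f = f' + 1 := ⟨f - 1, by omega⟩
      obtain ⟨g, rfl⟩ : ∃ g', g = g' + 1 := ⟨g - 1, by omega⟩
      have hlog : Nat.log 2 n < n := Nat.log_lt_self 2 (by omega)
      simp only [logStarAux, if_neg h2, ih _ hlog (f := f) (g := g) (by omega) (by omega)]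

lemma logStar_of_le_two {n : ℕ} (h : n ≤ 2) : logStar n = 0 :=
  logStarAux_of_le_two n h

lemma logStar_eq_logStar_log_add_one {n : ℕ} (h : 3 ≤ n) :
    logStar n = logStar (Nat.log 2 n) + 1 := by
  obtain ⟨k, rfl⟩ : ∃ k, n = k + 1 := ⟨n - 1, by omega⟩
  have hlog : Nat.log 2 (k + 1) < k + 1 := Nat.log_lt_self 2 (by omega)
  rw [logStar, logStarAux, if_neg (by omega), logStar, logStarAux_eq_of_le (by omega) le_rfl]

lemma eq_iterate_of_ne_cap {α : Type*} [LinearOrder α] {f : α → α} {c : ℕ → α} {cap : α}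
    {s : ℕ} (hrec : ∀ i, s ≤ i → c (i + 1) = min cap (f (c i))) :
    ∀ k, (∀ j ≤ k, c (s + j) ≠ cap) → c (s + k) = f^[k] (c s)
  | 0, _ => rfl
  | k + 1, hne => by
    have hstep := hrec (s + k) (by omega)
    rw [Function.iterate_succ_apply', ← eq_iterate_of_ne_cap hrec k fun j hj => hne j (by omega),
      ← add_assoc, hstep, (min_choice cap _).resolve_left (hstep ▸ hne (k + 1) le_rfl)]

noncomputable def mulExpSelf (y : ℝ) : ℝ := y * Real.exp y

lemma add_sq_le_mulExpSelf {y : ℝ} (hy : 0 ≤ y) : y + y ^ 2 ≤ mulExpSelf y := by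
  have := mul_le_mul_of_nonneg_left (Real.add_one_le_exp y) hy
  rw [mulExpSelf]
  nlinarith

lemma add_mul_sq_le_iterate_mulExpSelf {y₀ : ℝ} (hy₀ : 0 ≤ y₀) :
    ∀ k : ℕ, y₀ + k * y₀ ^ 2 ≤ mulExpSelf^[k] y₀
  | 0 => by simp
  | k + 1 => by
    have ih := add_mul_sq_le_iterate_mulExpSelf hy₀ k
    have hk : y₀ ≤ mulExpSelf^[k] y₀ := le_trans (le_add_of_nonneg_right (by positivity)) ih
    rw [Function.iterate_succ_apply']
    calc y₀ + (k + 1 : ℕ) * y₀ ^ 2 ≤ mulExpSelf^[k] y₀ + (mulExpSelf^[k] y₀) ^ 2 := by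
          push_cast; nlinarith
      _ ≤ _ := add_sq_le_mulExpSelf (hy₀.trans hk)

lemma two_pow_succ_le_mulExpSelf {m : ℕ} {z : ℝ} (hz : (m : ℝ) + 1 ≤ z) :
    (2 : ℝ) ^ (m + 1) ≤ mulExpSelf z :=
  calc (2 : ℝ) ^ (m + 1) ≤ Real.exp 1 ^ (m + 1) :=
        pow_le_pow_left₀ (by norm_num) (by linarith [Real.exp_one_gt_d9]) _
    _ = Real.exp ((m : ℝ) + 1) := by rw [← Real.exp_nat_mul]; push_cast; ring_nf
    _ ≤ Real.exp z := Real.exp_le_exp.mpr hz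
    _ ≤ mulExpSelf z := le_mul_of_one_le_left (Real.exp_pos z).le (by linarith)

lemma add_one_le_iterate_logStar_mulExpSelf (n : ℕ) {y : ℝ} (hy : 2 ≤ y) :
    (n : ℝ) + 1 ≤ mulExpSelf^[logStar n + 1] y := by
  induction n using Nat.strong_induction_on with
  | _ n ih =>
    by_cases h2 : n ≤ 2
    · have hn : (n : ℝ) ≤ 2 := by exact_mod_cast h2
      rw [logStar_of_le_two h2, Function.iterate_one]
      nlinarith [add_sq_le_mulExpSelf (y := y) (by linarith)]
    · rw [logStar_eq_logStar_log_add_one (by omega), Function.iterate_succ_apply']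
      have hz := ih _ (Nat.log_lt_self 2 (by omega))
      have hn : n + 1 ≤ 2 ^ (Nat.log 2 n + 1) := Nat.lt_pow_succ_log_self (by norm_num) n
      calc (n : ℝ) + 1 ≤ (2 : ℝ) ^ (Nat.log 2 n + 1) := by exact_mod_cast hn
        _ ≤ _ := two_pow_succ_le_mulExpSelf hz

lemma iterate_mul_exp_div_mul (A : ℝ) (hA : A ≠ 0) (k : ℕ) (y : ℝ) :
    (fun x => x * Real.exp (x / A))^[k] (A * y) = A * mulExpSelf^[k] y := by
  have hconj : Function.Semiconj (A * ·) mulExpSelf (fun x => x * Real.exp (x / A)) := by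
    intro y
    simp only [mulExpSelf, mul_div_cancel_left₀ y hA, mul_assoc]
  exact (hconj.iterate_right k y).symm

/-- For the sequence `c 1 = 1`, `c 2 = 1 - 1/200`,
`c (i+1) = min (Δ^{0.1}) (c i · exp(c i/(3·200·e^{200})))` for `i ≥ 2`,
the first index `t` with `c t = Δ^{0.1}` satisfies `t = O(log* Δ)`. -/
theorem stmt13 :
    ∃ C : ℝ, 0 < C ∧ ∀ Δ : ℕ, 2 ≤ Δ → ∀ c : ℕ → ℝ,
      c 1 = 1 → c 2 = 1 - 1 / 200 →
      (∀ i, 2 ≤ i →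
        c (i + 1) = min ((Δ : ℝ) ^ (0.1 : ℝ))
          (c i * Real.exp (c i / (3 * 200 * Real.exp 200)))) →
      ∀ t : ℕ, c t = (Δ : ℝ) ^ (0.1 : ℝ) →
        (∀ t' < t, c t' ≠ (Δ : ℝ) ^ (0.1 : ℝ)) →
        (t : ℝ) ≤ C * (logStar Δ + 1) := by
  set A : ℝ := 3 * 200 * Real.exp 200
  have hA : 1 ≤ A := by
    have := Real.one_le_exp (x := 200) (by norm_num)
    simp only [A]; linarith
  set y₀ : ℝ := (1 - 1 / 200) / A
  have hy₀ : 0 ≤ y₀ := by positivity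
  obtain ⟨N, hN⟩ : ∃ N : ℕ, 2 ≤ y₀ + N * y₀ ^ 2 := by
    obtain ⟨N, hN⟩ := exists_nat_ge (2 / y₀ ^ 2)
    exact ⟨N, by rw [div_le_iff₀ (by positivity)] at hN; linarith⟩
  refine ⟨N + 3, by positivity, fun Δ hΔ c _ hc2 hrec t _ hmin => ?_⟩
  suffices t ≤ 2 + (logStar Δ + 1 + N) by
    have : (t : ℝ) ≤ 2 + (logStar Δ + 1 + N) := by exact_mod_cast this
    nlinarith [(logStar Δ).cast_nonneg (α := ℝ), N.cast_nonneg (α := ℝ)]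
  by_contra! ht
  set K := logStar Δ + 1 + N
  have horbit : c (2 + K) = A * mulExpSelf^[K] y₀ := by
    rw [eq_iterate_of_ne_cap (f := fun x => x * Real.exp (x / A)) hrec K
        fun j hj => hmin _ (by omega),
      hc2, ← iterate_mul_exp_div_mul A (by positivity), mul_div_cancel₀ _ (by positivity)]
  have hbig : (Δ : ℝ) + 1 ≤ mulExpSelf^[K] y₀ := by
    rw [Function.iterate_add_apply]
    exact add_one_le_iterate_logStar_mulExpSelf Δ
      (hN.trans (add_mul_sq_le_iterate_mulExpSelf hy₀ N))
  have hcap : (Δ : ℝ) ^ (0.1 : ℝ) ≤ Δ :=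
    Real.rpow_le_self_of_one_le (by exact_mod_cast (by omega : 1 ≤ Δ)) (by norm_num)
  have hle : c (2 + K) ≤ (Δ : ℝ) ^ (0.1 : ℝ) := by
    rw [show 2 + K = 1 + K + 1 by omega, hrec _ (by omega)]
    exact min_le_left _ _
  nlinarith
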